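/- Let r ≥ 3. Define Σ_{2r−2} to be the subcomplex of (M_r)^{*2}_Δ generated by the facets of dimension 2r−2. Then Σ_{2r−2} has exactly two connected components, each isomorphic (as a simplicial complex) to the join (M_r|S) * Δ_{r−1} of the restriction M_r|S with an (r−1)-simplex, where S = E_1 ∪ ⋯ ∪ E_{r−1}; and the involution on (M_r)^{*2}_Δ swapping the two join factors interchanges these two components. -/

import Mathlib

/-!
A facet of dimension `2r-2` has rows of sizes `r-1` and `r`. Maximality forces the small row to
meet every block `E_i`: otherwise some vertex of an untouched block (which has `r ≥ 2` vertices,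
at most one of them in the large row) could be added to it. Having only `r-1` vertices, the small
row is then a transversal of `S`, and the large row must be all of `{w_1, …, w_r}`, since a
missing `w` could again be added to the small row. Conversely a transversal of `S` together
with all the `w`'s is such a facet, and every face of `M_r|S` extends to a transversal. So `Σ`
consists of the faces with one row in `S` and the other among the `w`'s: a copy of
`(M_r|S) * Δ_{r-1}` and its mirror image, which share only the empty face.
-/

/-- Independence in the matroid `M_r` (ground set `Fin r × Fin r`; `(i,j)` is `v_{i+1}^{j+1}`
for `i < r-1` and `w_{j+1}` for `i = r-1`). -/
def MrIndep (r : ℕ) (A : Finset (Fin r × Fin r)) : Prop :=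
  A.card ≤ r ∧ ∀ i : Fin r, (i : ℕ) < r - 1 → (A.filter (fun p => p.1 = i)).card ≤ 1

/-- A face of the `2`-fold deleted join `(M_r)^{*2}_Δ`. -/
def Face2 (r : ℕ) (p : Finset (Fin r × Fin r) × Finset (Fin r × Fin r)) : Prop :=
  MrIndep r p.1 ∧ MrIndep r p.2 ∧ Disjoint p.1 p.2

/-- A facet of `(M_r)^{*2}_Δ`. -/
def Facet2 (r : ℕ) (p : Finset (Fin r × Fin r) × Finset (Fin r × Fin r)) : Prop :=
  Face2 r p ∧ ∀ q, Face2 r q → p.1 ⊆ q.1 → p.2 ⊆ q.2 → q = p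

/-- The last block `{w_1, …, w_r}`. -/
def lastBlock (r : ℕ) : Finset (Fin r × Fin r) :=
  Finset.univ.filter (fun p => (p.1 : ℕ) = r - 1)

/-- `S = E_1 ∪ ⋯ ∪ E_{r-1}`, the union of the first `r-1` blocks. -/
def Sblocks (r : ℕ) : Finset (Fin r × Fin r) :=
  Finset.univ.filter (fun p => (p.1 : ℕ) < r - 1)

/-- A face of the restriction `M_r|S`. -/
def FaceS (r : ℕ) (A : Finset (Fin r × Fin r)) : Prop :=
  (∀ p ∈ A, (p.1 : ℕ) < r - 1) ∧
  ∀ i : Fin r, (A.filter (fun p => p.1 = i)).card ≤ 1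

/-- Membership in the subcomplex `Σ_{2r-2}` generated by the facets of dimension `2r-2`. -/
def InSigmaLow (r : ℕ) (p : Finset (Fin r × Fin r) × Finset (Fin r × Fin r)) : Prop :=
  Face2 r p ∧ ∃ q, Facet2 r q ∧ q.1.card + q.2.card = 2 * r - 1 ∧ p.1 ⊆ q.1 ∧ p.2 ⊆ q.2

/-- The first component: row 1 in `S`, row 2 in the last block. -/
def Comp1 (r : ℕ) (p : Finset (Fin r × Fin r) × Finset (Fin r × Fin r)) : Prop :=
  Face2 r p ∧ p.1 ⊆ Sblocks r ∧ p.2 ⊆ lastBlock r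

/-- The second component: row 2 in `S`, row 1 in the last block. -/
def Comp2 (r : ℕ) (p : Finset (Fin r × Fin r) × Finset (Fin r × Fin r)) : Prop :=
  Face2 r p ∧ p.2 ⊆ Sblocks r ∧ p.1 ⊆ lastBlock r

open Finset

lemma injOn_fst_of_card_filter_le_one {α β : Type*} [DecidableEq α] {s : Finset (α × β)}
    (h : ∀ a, (s.filter fun x => x.1 = a).card ≤ 1) : Set.InjOn Prod.fst (s : Set (α × β)) :=
  fun x hx y hy hxy =>
    card_le_one.1 (h x.1) x (mem_filter.2 ⟨hx, rfl⟩) y (mem_filter.2 ⟨hy, hxy.symm⟩)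

variable {r : ℕ} {A B T : Finset (Fin r × Fin r)}
  {p q : Finset (Fin r × Fin r) × Finset (Fin r × Fin r)}

@[simp]
lemma mem_lastBlock {x : Fin r × Fin r} : x ∈ lastBlock r ↔ (x.1 : ℕ) = r - 1 := by
  simp [lastBlock]

@[simp]
lemma mem_Sblocks {x : Fin r × Fin r} : x ∈ Sblocks r ↔ (x.1 : ℕ) < r - 1 := by
  simp [Sblocks]

lemma disjoint_Sblocks_lastBlock : Disjoint (Sblocks r) (lastBlock r) :=
  disjoint_left.2 fun x hS hL => by simp only [mem_Sblocks, mem_lastBlock] at hS hL; omega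

def lastRow (hr : 1 ≤ r) : Fin r := ⟨r - 1, by omega⟩

lemma lastBlock_eq_product (hr : 1 ≤ r) : lastBlock r = {lastRow hr} ×ˢ univ := by
  ext x
  simp only [mem_lastBlock, mem_product, mem_singleton, mem_univ, and_true, Fin.ext_iff, lastRow]

lemma card_lastBlock (hr : 1 ≤ r) : (lastBlock r).card = r := by
  simp [lastBlock_eq_product hr]

lemma injOn_snd_of_subset_lastBlock (h : B ⊆ lastBlock r) :
    Set.InjOn Prod.snd (B : Set (Fin r × Fin r)) := by
  intro x hx y hy hxy
  have hx1 := mem_lastBlock.1 (h hx)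
  have hy1 := mem_lastBlock.1 (h hy)
  exact Prod.ext (Fin.ext (hx1.trans hy1.symm)) hxy

lemma MrIndep.insert (hA : MrIndep r A) (hcard : A.card < r) {x : Fin r × Fin r}
    (hx : (x.1 : ℕ) < r - 1 → ∀ a ∈ A, a.1 ≠ x.1) : MrIndep r (insert x A) := by
  refine ⟨(card_insert_le x A).trans hcard, fun i hi => ?_⟩
  rw [filter_insert]
  split_ifs with hxi
  · subst hxi
    rw [filter_false_of_mem fun a ha => hx hi a ha]
    simp
  · exact hA.2 i hi

lemma mrIndep_of_subset_lastBlock (h : B ⊆ lastBlock r) : MrIndep r B := by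
  refine ⟨?_, fun i hi => ?_⟩
  · simpa using card_le_card_of_injOn Prod.snd (fun _ _ => mem_coe.2 (mem_univ _))
      (injOn_snd_of_subset_lastBlock h)
  · rw [filter_false_of_mem fun x hx hxi => by have := mem_lastBlock.1 (h hx); omega]
    simp

lemma FaceS.subset_Sblocks (hA : FaceS r A) : A ⊆ Sblocks r :=
  fun x hx => mem_Sblocks.2 (hA.1 x hx)

lemma FaceS.mrIndep (hA : FaceS r A) : MrIndep r A := by
  refine ⟨?_, fun i _ => hA.2 i⟩
  simpa using card_le_card_of_injOn Prod.fst (fun _ _ => mem_coe.2 (mem_univ _))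
    (injOn_fst_of_card_filter_le_one hA.2)

lemma Face2.swap (h : Face2 r p) : Face2 r (p.2, p.1) := ⟨h.2.1, h.1, h.2.2.symm⟩

lemma Facet2.swap (h : Facet2 r p) : Facet2 r (p.2, p.1) := by
  refine ⟨h.1.swap, fun q hq h1 h2 => ?_⟩
  have := h.2 (q.2, q.1) hq.swap h2 h1
  rw [← this]

lemma InSigmaLow.swap (h : InSigmaLow r p) : InSigmaLow r (p.2, p.1) := by
  obtain ⟨hp, q, hq, hcard, h1, h2⟩ := h
  exact ⟨hp.swap, (q.2, q.1), hq.swap, (add_comm _ _).trans hcard, h2, h1⟩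

lemma Facet2.mem_fst_of_insert (hq : Facet2 r q) {x : Fin r × Fin r} (hx : x ∉ q.2)
    (hind : MrIndep r (insert x q.1)) : x ∈ q.1 := by
  have := hq.2 (insert x q.1, q.2) ⟨hind, hq.1.2.1, disjoint_insert_left.2 ⟨hx, hq.1.2.2⟩⟩
    (subset_insert _ _) subset_rfl
  rw [← this]
  exact mem_insert_self _ _

lemma Facet2.exists_mem_fst_of_lt (hq : Facet2 r q) (hcard : q.1.card < r) {i : Fin r}
    (hi : (i : ℕ) < r - 1) : ∃ x ∈ q.1, x.1 = i := by
  by_contra! hrow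
  have hlt :
      (q.2.filter fun x => x.1 = i).card < ({i} ×ˢ univ : Finset (Fin r × Fin r)).card := by
    have := hq.1.2.1.2 i hi
    simp only [card_product, card_singleton, card_univ, Fintype.card_fin, one_mul]
    omega
  obtain ⟨x, hxrow, hx⟩ := exists_mem_notMem_of_card_lt_card hlt
  have hxi : x.1 = i := mem_singleton.1 (mem_product.1 hxrow).1
  have hx2 : x ∉ q.2 := fun h => hx (mem_filter.2 ⟨h, hxi⟩)
  exact hrow x (hq.mem_fst_of_insert hx2 (hq.1.1.insert hcard fun _ a ha => hxi ▸ hrow a ha)) hxi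

lemma subset_Sblocks_of_forall_exists_mem
    (hT : ∀ i : Fin r, (i : ℕ) < r - 1 → ∃ x ∈ T, x.1 = i)
    (hcard : T.card ≤ r - 1) : T ⊆ Sblocks r := by
  have hsurj : Set.SurjOn Prod.fst (↑(T ∩ Sblocks r) : Set (Fin r × Fin r))
      (↑(univ.filter fun i : Fin r => (i : ℕ) < r - 1) : Set (Fin r)) := by
    intro i hi
    simp only [coe_filter, mem_univ, true_and, Set.mem_ofPred_eq] at hi
    obtain ⟨x, hx, rfl⟩ := hT i hi
    exact ⟨x, by simp [hx, hi], rfl⟩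
  have hle := card_le_card_of_surjOn _ hsurj
  rw [Fin.card_filter_val_lt] at hle
  exact inter_eq_left.1 (eq_of_subset_of_card_le inter_subset_left (by omega))

lemma Facet2.subset_Sblocks_and_eq_lastBlock (hr : 1 ≤ r) (hq : Facet2 r q)
    (h1 : q.1.card = r - 1) (h2 : q.2.card = r) : q.1 ⊆ Sblocks r ∧ q.2 = lastBlock r := by
  have hS : q.1 ⊆ Sblocks r :=
    subset_Sblocks_of_forall_exists_mem (fun i hi => hq.exists_mem_fst_of_lt (by omega) hi) h1.le
  refine ⟨hS, (eq_of_subset_of_card_le (fun w hw => ?_) (by rw [h2, card_lastBlock hr])).symm⟩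
  by_contra hw2
  have hw1 := hq.mem_fst_of_insert hw2 <| hq.1.1.insert (by omega) fun h => by
    rw [mem_lastBlock] at hw; omega
  exact disjoint_left.1 disjoint_Sblocks_lastBlock (hS hw1) hw

lemma FaceS.exists_transversal (hA : FaceS r A) :
    ∃ T, A ⊆ T ∧ FaceS r T ∧ T.card = r - 1 ∧
      ∀ i : Fin r, (i : ℕ) < r - 1 → ∃ x ∈ T, x.1 = i := by
  have hcol : ∀ i : Fin r, ∃ j, ∀ a ∈ A, a.1 = i → a.2 = j := by
    intro i
    by_cases h : ∃ a ∈ A, a.1 = i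
    · obtain ⟨a, ha, rfl⟩ := h
      exact ⟨a.2, fun b hb hba =>
        congrArg Prod.snd (injOn_fst_of_card_filter_le_one hA.2 hb ha hba)⟩
    · push Not at h
      exact ⟨i, fun a ha hai => (h a ha hai).elim⟩
  choose g hg using hcol
  refine ⟨(univ.filter fun i : Fin r => (i : ℕ) < r - 1).image fun i => (i, g i),
    fun a ha => ?_, ⟨?_, fun i => ?_⟩, ?_, fun i hi => ⟨(i, g i), ?_, rfl⟩⟩
  · exact mem_image.2 ⟨a.1, by simpa using hA.1 a ha, Prod.ext rfl (hg _ a ha rfl).symm⟩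
  · simp
  · refine card_le_one.2 fun x hx y hy => ?_
    simp only [mem_filter, mem_image, mem_univ, true_and] at hx hy
    obtain ⟨⟨j, -, rfl⟩, rfl⟩ := hx
    obtain ⟨⟨k, -, rfl⟩, rfl : k = j⟩ := hy
    rfl
  · rw [card_image_of_injective _ fun _ _ h => congrArg Prod.fst h, Fin.card_filter_val_lt]
    omega
  · simp [hi]

lemma facet2_of_transversal (hr : 1 ≤ r) (hT : FaceS r T)
    (hrows : ∀ i : Fin r, (i : ℕ) < r - 1 → ∃ x ∈ T, x.1 = i) :
    Facet2 r (T, lastBlock r) := by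
  refine ⟨⟨hT.mrIndep, mrIndep_of_subset_lastBlock subset_rfl,
    disjoint_Sblocks_lastBlock.mono_left hT.subset_Sblocks⟩, ?_⟩
  rintro ⟨Q1, Q2⟩ hQ (hTQ : T ⊆ Q1) (hLQ : lastBlock r ⊆ Q2)
  have hQ2 : Q2 = lastBlock r :=
    (eq_of_subset_of_card_le hLQ (by rw [card_lastBlock hr]; exact hQ.2.1.1)).symm
  refine Prod.ext (Subset.antisymm (fun x hx => ?_) hTQ) hQ2
  have hxS : (x.1 : ℕ) < r - 1 := by
    have hxL : x ∉ lastBlock r := hQ2 ▸ disjoint_left.1 hQ.2.2 hx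
    rw [mem_lastBlock] at hxL
    omega
  obtain ⟨t, ht, htx⟩ := hrows x.1 hxS
  have hxt : x = t :=
    card_le_one.1 (hQ.1.2 x.1 hxS) x (mem_filter.2 ⟨hx, rfl⟩) t (mem_filter.2 ⟨hTQ ht, htx⟩)
  exact hxt ▸ ht

lemma comp1_iff : Comp1 r p ↔ FaceS r p.1 ∧ p.2 ⊆ lastBlock r := by
  refine ⟨fun ⟨hp, hS, hL⟩ => ⟨⟨fun x hx => mem_Sblocks.1 (hS hx), fun i => ?_⟩, hL⟩,
    fun ⟨hA, hL⟩ => ⟨⟨hA.mrIndep, mrIndep_of_subset_lastBlock hL,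
      disjoint_Sblocks_lastBlock.mono hA.subset_Sblocks hL⟩, hA.subset_Sblocks, hL⟩⟩
  by_cases hi : (i : ℕ) < r - 1
  · exact hp.1.2 i hi
  · rw [filter_false_of_mem fun x hx (hxi : x.1 = i) => hi (hxi ▸ mem_Sblocks.1 (hS hx))]
    simp

lemma comp1_iff_comp2_swap : Comp1 r p ↔ Comp2 r (p.2, p.1) :=
  ⟨fun ⟨hp, hS, hL⟩ => ⟨hp.swap, hS, hL⟩, fun ⟨hp, hS, hL⟩ => ⟨hp.swap, hS, hL⟩⟩

lemma Comp1.inSigmaLow (hr : 1 ≤ r) (h : Comp1 r p) : InSigmaLow r p := by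
  obtain ⟨T, hAT, hT, hTcard, hrows⟩ := (comp1_iff.1 h).1.exists_transversal
  refine ⟨h.1, (T, lastBlock r), facet2_of_transversal hr hT hrows, ?_, hAT, h.2.2⟩
  rw [hTcard, card_lastBlock hr]
  omega

lemma inSigmaLow_iff (hr : 1 ≤ r) : InSigmaLow r p ↔ Comp1 r p ∨ Comp2 r p := by
  refine ⟨fun ⟨hp, q, hq, hcard, hpq1, hpq2⟩ => ?_, ?_⟩
  · have := hq.1.1.1
    have := hq.1.2.1.1
    by_cases h2 : q.2.card = r
    · obtain ⟨hS, hL⟩ := hq.subset_Sblocks_and_eq_lastBlock hr (by omega) h2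
      exact Or.inl ⟨hp, hpq1.trans hS, hL ▸ hpq2⟩
    · obtain ⟨hS, hL⟩ := hq.swap.subset_Sblocks_and_eq_lastBlock hr
        (show q.2.card = r - 1 by omega) (show q.1.card = r by omega)
      exact Or.inr ⟨hp, hpq2.trans hS, hL ▸ hpq1⟩
  · rintro (h | h)
    · exact h.inSigmaLow hr
    · exact ((comp1_iff_comp2_swap (p := (p.2, p.1)).2 h).inSigmaLow hr).swap

lemma eq_empty_of_comp1_of_comp2 (h1 : Comp1 r p) (h2 : Comp2 r p) : p = (∅, ∅) :=
  Prod.ext ((disjoint_self_iff_empty _).1 (disjoint_Sblocks_lastBlock.mono h1.2.1 h2.2.2))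
    ((disjoint_self_iff_empty _).1 (disjoint_Sblocks_lastBlock.mono h2.2.1 h1.2.2))

def lastBlockSubsetEquiv (hr : 1 ≤ r) :
    {B : Finset (Fin r × Fin r) // B ⊆ lastBlock r} ≃ Finset (Fin r) where
  toFun B := B.1.image Prod.snd
  invFun J :=
    ⟨{lastRow hr} ×ˢ J,
      lastBlock_eq_product hr ▸ product_subset_product_right (subset_univ J)⟩
  left_inv B := by
    obtain ⟨B, hB⟩ := B
    rw [lastBlock_eq_product hr] at hB
    ext x
    simp only [mem_product, mem_singleton, mem_image]
    refine ⟨fun ⟨hx, a, ha, hax⟩ => ?_,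
      fun hx => ⟨mem_singleton.1 (mem_product.1 (hB hx)).1, x, hx, rfl⟩⟩
    rwa [← Prod.ext ((mem_singleton.1 (mem_product.1 (hB ha)).1).trans hx.symm) hax]
  right_inv J := product_image_snd (singleton_nonempty _)

lemma card_lastBlockSubsetEquiv (hr : 1 ≤ r)
    (B : {B : Finset (Fin r × Fin r) // B ⊆ lastBlock r}) :
    (lastBlockSubsetEquiv hr B).card = B.1.card :=
  card_image_of_injOn (injOn_snd_of_subset_lastBlock B.2)

def comp1Equiv (hr : 1 ≤ r) :
    {p : Finset (Fin r × Fin r) × Finset (Fin r × Fin r) // Comp1 r p} ≃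
      {A : Finset (Fin r × Fin r) // FaceS r A} × Finset (Fin r) :=
  (Equiv.subtypeEquivRight fun _ => comp1_iff).trans <|
    Equiv.subtypeProdEquivProd.trans <| Equiv.prodCongr (Equiv.refl _) (lastBlockSubsetEquiv hr)

lemma card_comp1Equiv (hr : 1 ≤ r)
    (p : {p : Finset (Fin r × Fin r) × Finset (Fin r × Fin r) // Comp1 r p}) :
    (comp1Equiv hr p).1.val.card + (comp1Equiv hr p).2.card = p.val.1.card + p.val.2.card :=
  congrArg (p.val.1.card + ·) (card_lastBlockSubsetEquiv hr ⟨p.val.2, p.2.2.2⟩)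

/-- The subcomplex `Σ_{2r-2}` of `(M_r)^{*2}_Δ` generated by the facets of dimension `2r-2`
is the union of two components that meet only in the empty face, are interchanged by the
involution swapping the two rows, and each of which is isomorphic (by a cardinality-
preserving bijection of faces) to the join `(M_r|S) * Δ_{r-1}` of the restriction `M_r|S`
with the full simplex on `r` vertices. -/
theorem stmt14 (r : ℕ) (hr : 3 ≤ r) :
    (∀ p, InSigmaLow r p ↔ (Comp1 r p ∨ Comp2 r p)) ∧
    (∀ p, Comp1 r p → Comp2 r p → p = (∅, ∅)) ∧
    (∀ p : Finset (Fin r × Fin r) × Finset (Fin r × Fin r),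
      Comp1 r p ↔ Comp2 r (p.2, p.1)) ∧
    (∃ e : {p : Finset (Fin r × Fin r) × Finset (Fin r × Fin r) // Comp1 r p} ≃
        {A : Finset (Fin r × Fin r) // FaceS r A} × Finset (Fin r),
      ∀ p : {p : Finset (Fin r × Fin r) × Finset (Fin r × Fin r) // Comp1 r p},
        p.val.1.card + p.val.2.card = (e p).1.val.card + (e p).2.card) := by
  have hr1 : 1 ≤ r := by omega
  exact ⟨fun _ => inSigmaLow_iff hr1, fun _ => eq_empty_of_comp1_of_comp2,
    fun _ => comp1_iff_comp2_swap, comp1Equiv hr1, fun p => (card_comp1Equiv hr1 p).symm⟩
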